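/- arXiv:1912.00224 — 5 statements merged into one kernel-verified Lean document; each statement's English description precedes it below -/
import Mathlib

section
/- Fix an integer k ≥ 1 with k ≡ 0 or 2 (mod 3) and a sequence δ = (δ₁, …, δ_k) of positive real numbers. There exists a constant c > 0 such that for every integer n ≥ 1 there exist finite sets P₁, …, P_{k+1} ⊆ ℝ², each of cardinality at most n, for which the number of multipartite k-chains C_k(P₁, …, P_{k+1}) with respect to δ is at least c · n^{⌊(k+1)/3⌋ + 1}. -/
/-- The number of multipartite `k`-chains with respect to `δ` with `i`-th point in `P i`:
`(k+1)`-tuples of pairwise distinct points with consecutive distances `δ i`. -/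
noncomputable def chainCount (d k : ℕ) (δ : Fin k → ℝ)
    (P : Fin (k + 1) → Set (EuclideanSpace ℝ (Fin d))) : ℕ :=
  Set.ncard {p : Fin (k + 1) → EuclideanSpace ℝ (Fin d) |
    Function.Injective p ∧ (∀ i, p i ∈ P i) ∧
    ∀ i : Fin k, dist (p i.castSucc) (p i.succ) = δ i}

/-!
Identify the plane with `ℂ` and deform the staircase `q` with `q (e + 1) - q e = δ e`, horizontal
unless `e ≡ 2 (mod 3)`, into chains `p`: the points `p (3j+1) = q (3j+1)` stay fixed, while `p 0`
and `p (3j+2)` rotate by small independent angles about their fixed neighbour. Then `p (3j+3)` is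
taken on both the circle of radius `δ (3j+2)` about `p (3j+2)` and the circle of radius
`δ (3j+3)` about `q (3j+4)`. At angle `0` these circles meet at the corner `q (3j+3)`, and since
the corner is a right angle, `|q (3j+4) - q (3j+2)|` lies strictly between the difference and the
sum of the radii; so the intersection persists and moves continuously for small angles. This
gives `⌊(k+1)/3⌋ + 1` angles, each point depends on at most one of them, and for small angles the
points stay close to the injective staircase. Letting every angle range over `n` values gives
`n ^ (⌊(k+1)/3⌋ + 1)` chains whose `i`-th points take at most `n` values.
-/

open Function Filter Topology Set Complex
open scoped Real

def IsDistChain {X : Type*} [Dist X] {k : ℕ} (δ : Fin k → ℝ) (p : Fin (k + 1) → X) : Prop :=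
  Injective p ∧ ∀ i : Fin k, dist (p i.castSucc) (p i.succ) = δ i

lemma IsDistChain.comp_isometry {X Y : Type*} [MetricSpace X] [PseudoMetricSpace Y]
    {k : ℕ} {δ : Fin k → ℝ} {p : Fin (k + 1) → X} (h : IsDistChain δ p) {e : X → Y}
    (he : Isometry e) : IsDistChain δ (e ∘ p) :=
  ⟨he.injective.comp h.1, fun i => (he.dist_eq _ _).trans (h.2 i)⟩

lemma Filter.Tendsto.eventually_injective {α ι X : Type*} [Finite ι] [TopologicalSpace X]
    [T2Space X] {l : Filter α} {f : α → ι → X} {p : ι → X} (hf : Tendsto f l (𝓝 p))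
    (hp : Injective p) : ∀ᶠ a in l, Injective (f a) := by
  have hpair (i j : ι) : ∀ᶠ a in l, f a i = f a j → i = j := by
    by_cases hij : i = j
    · exact .of_forall fun _ _ => hij
    have hf₂ := (tendsto_pi_nhds.1 hf i).prodMk_nhds (tendsto_pi_nhds.1 hf j)
    filter_upwards [hf₂.eventually (isClosed_diagonal.isOpen_compl.mem_nhds (hp.ne hij))]
      with a ha h using absurd h ha
  filter_upwards [eventually_all.2 fun i => eventually_all.2 (hpair i)] with a ha i j using ha i j

lemma extend_val_pos {k : ℕ} {δ : Fin k → ℝ} (hδ : ∀ i, 0 < δ i) (e : ℕ) :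
    0 < extend Fin.val δ 1 e := by
  by_cases he : ∃ i : Fin k, i.val = e
  · obtain ⟨i, rfl⟩ := he
    simpa [Fin.val_injective.extend_apply] using hδ i
  · simp [extend_apply' _ _ _ he]

lemma pow_le_chainCount {d k m n : ℕ} {δ : Fin k → ℝ} (ρ : Fin (k + 1) → Fin m)
    (f : Fin (k + 1) → Fin n → EuclideanSpace ℝ (Fin d))
    (hchain : ∀ σ : Fin m → Fin n, IsDistChain δ fun i => f i (σ (ρ i)))
    (hsection : ∀ j, ∃ i, ρ i = j ∧ Injective (f i)) :
    n ^ m ≤ chainCount d k δ fun i => range (f i) := by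
  have hfin : {p : Fin (k + 1) → EuclideanSpace ℝ (Fin d) | Injective p ∧
      (∀ i, p i ∈ range (f i)) ∧ ∀ i : Fin k, dist (p i.castSucc) (p i.succ) = δ i}.Finite :=
    (Set.Finite.pi fun i => finite_range (f i)).subset fun p hp => by
      simpa using hp.2.1
  calc n ^ m = (univ : Set (Fin m → Fin n)).ncard := by simp [Set.ncard_univ]
    _ ≤ _ := by
      refine Set.ncard_le_ncard_of_injOn (fun σ i => f i (σ (ρ i)))
        (fun σ _ => ⟨(hchain σ).1, fun i => mem_range_self _, (hchain σ).2⟩) ?_ hfin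
      intro σ _ σ' _ h
      funext j
      obtain ⟨i, rfl, hi⟩ := hsection j
      exact hi (congrFun h i)

lemma exists_pow_le_chainCount {d k m : ℕ} {δ : Fin k → ℝ} (ρ : Fin (k + 1) → Fin m)
    (F : Fin (k + 1) → ℝ → EuclideanSpace ℝ (Fin d))
    (hchain : ∀ᶠ u in 𝓝 (0 : Fin m → ℝ), IsDistChain δ fun i => F i (u (ρ i)))
    {V : Set ℝ} (hV : V ∈ 𝓝 0) (hsection : ∀ j, ∃ i, ρ i = j ∧ InjOn (F i) V) (n : ℕ) :
    ∃ P : Fin (k + 1) → Finset (EuclideanSpace ℝ (Fin d)),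
      (∀ i, (P i).card ≤ n) ∧ n ^ m ≤ chainCount d k δ fun i => P i := by
  classical
  obtain ⟨r, hr, hgood⟩ := Metric.eventually_nhds_iff.1 hchain
  have hU : Metric.ball 0 r ∩ V ∈ 𝓝 (0 : ℝ) := Filter.inter_mem (Metric.ball_mem_nhds 0 hr) hV
  let ι := (infinite_of_mem_nhds 0 hU).natEmbedding
  let τ : Fin n → ↥(Metric.ball (0 : ℝ) r ∩ V) := fun l => ι l
  have hτ : Injective τ := ι.injective.comp Fin.val_injective
  let f : Fin (k + 1) → Fin n → EuclideanSpace ℝ (Fin d) := fun i l => F i (τ l)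
  refine ⟨fun i => Finset.univ.image (f i), fun i => Finset.card_image_le.trans (by simp), ?_⟩
  have hcount := pow_le_chainCount ρ f
    (fun σ => hgood ((dist_pi_lt_iff hr).2 fun j => (τ (σ j)).2.1)) ?_
  · simpa [Finset.coe_image] using hcount
  intro j
  obtain ⟨i, hij, hi⟩ := hsection j
  exact ⟨i, hij, fun l l' h => hτ (Subtype.ext (hi (τ l).2.2 (τ l').2.2 h))⟩

-- `A + (B - A) * w` with `‖w‖² = b² / s` and `‖w - 1‖² = c² / s`, where `s = ‖B - A‖²`.
noncomputable def circleInterCoeff (b c s : ℝ) : ℂ :=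
  ((s + b ^ 2 - c ^ 2) / (2 * s) : ℝ) + (√(b ^ 2 * s - ((s + b ^ 2 - c ^ 2) / 2) ^ 2) / s : ℝ) * I

noncomputable def circleInter (b c : ℝ) (A B : ℂ) : ℂ :=
  A + (B - A) * circleInterCoeff b c (normSq (B - A))

section circleInter

variable {b c : ℝ} {A B : ℂ}

lemma normSq_sub_eq_dist_sq (A B : ℂ) : normSq (B - A) = dist A B ^ 2 := by
  rw [← Complex.sq_norm, dist_comm, dist_eq]

lemma circleInter_discriminant_nonneg (h₁ : |b - c| < dist A B) (h₂ : dist A B ≤ b + c) :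
    0 ≤ b ^ 2 * normSq (B - A) - ((normSq (B - A) + b ^ 2 - c ^ 2) / 2) ^ 2 := by
  rw [normSq_sub_eq_dist_sq]
  have hbc : (b - c) ^ 2 < dist A B ^ 2 := by
    rw [← sq_abs]; exact pow_lt_pow_left₀ h₁ (abs_nonneg _) two_ne_zero
  have hbc' : dist A B ^ 2 ≤ (b + c) ^ 2 := pow_le_pow_left₀ dist_nonneg h₂ 2
  have hfactor : b ^ 2 * dist A B ^ 2 - ((dist A B ^ 2 + b ^ 2 - c ^ 2) / 2) ^ 2 =
      ((b + c) ^ 2 - dist A B ^ 2) * (dist A B ^ 2 - (b - c) ^ 2) / 4 := by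
    ring
  rw [hfactor]
  exact div_nonneg (mul_nonneg (sub_nonneg.2 hbc') (sub_nonneg.2 hbc.le)) zero_le_four

lemma dist_circleInter_left (h₁ : |b - c| < dist A B) (h₂ : dist A B ≤ b + c) :
    dist (circleInter b c A B) A = b := by
  have hb : 0 ≤ b := by rw [abs_sub_lt_iff] at h₁; linarith
  have hs : normSq (B - A) ≠ 0 := by
    rw [normSq_sub_eq_dist_sq]; exact pow_ne_zero 2 ((abs_nonneg _).trans_lt h₁).ne'
  have hD := circleInter_discriminant_nonneg h₁ h₂
  rw [dist_eq, ← sq_eq_sq₀ (norm_nonneg _) hb, Complex.sq_norm, circleInter, add_sub_cancel_left,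
    normSq_mul, circleInterCoeff, normSq_add_mul_I, div_pow, div_pow, Real.sq_sqrt hD]
  field_simp
  ring

lemma dist_circleInter_right (h₁ : |b - c| < dist A B) (h₂ : dist A B ≤ b + c) :
    dist (circleInter b c A B) B = c := by
  have hc : 0 ≤ c := by rw [abs_sub_lt_iff] at h₁; linarith
  have hs : normSq (B - A) ≠ 0 := by
    rw [normSq_sub_eq_dist_sq]; exact pow_ne_zero 2 ((abs_nonneg _).trans_lt h₁).ne'
  have hD := circleInter_discriminant_nonneg h₁ h₂
  have : circleInter b c A B - B = (B - A) * (circleInterCoeff b c (normSq (B - A)) - 1) := by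
    rw [circleInter]; ring
  rw [dist_eq, ← sq_eq_sq₀ (norm_nonneg _) hc, Complex.sq_norm, this, normSq_mul, circleInterCoeff,
    add_sub_right_comm, ← ofReal_one, ← ofReal_sub, normSq_add_mul_I, div_pow, Real.sq_sqrt hD]
  field_simp
  ring

lemma continuousAt_circleInter (h : A ≠ B) :
    ContinuousAt (fun p : ℂ × ℂ => circleInter b c p.1 p.2) (A, B) := by
  have hs : normSq (B - A) ≠ 0 := by simpa [sub_eq_zero] using h.symm
  unfold circleInter circleInterCoeff
  fun_prop (disch := simp [hs])

lemma circleInter_add_mul_I (hb : 0 < b) (hc : 0 < c) (A : ℂ) :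
    circleInter b c A (A + (c + b * I)) = A + b * I := by
  have hs : normSq (c + b * I) = b ^ 2 + c ^ 2 := by rw [normSq_add_mul_I]; ring
  have hD : b ^ 2 * (b ^ 2 + c ^ 2) - ((b ^ 2 + c ^ 2 + b ^ 2 - c ^ 2) / 2) ^ 2 = (b * c) ^ 2 := by
    ring
  have : (b : ℂ) ^ 2 + c ^ 2 ≠ 0 := by exact_mod_cast (by positivity : b ^ 2 + c ^ 2 ≠ 0)
  rw [circleInter, add_sub_cancel_left, hs, circleInterCoeff, hD, Real.sqrt_sq (by positivity)]
  push_cast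
  field_simp
  linear_combination (2 * b ^ 2 * c : ℂ) * I_sq

end circleInter

noncomputable def rotateAbout (c : ℂ) (t : ℝ) (z : ℂ) : ℂ := c + (z - c) * exp (t * I)

section rotateAbout

variable {c z : ℂ}

lemma dist_rotateAbout_center (t : ℝ) : dist (rotateAbout c t z) c = dist z c := by
  simp [rotateAbout, dist_eq, norm_exp_ofReal_mul_I]

lemma rotateAbout_zero : rotateAbout c 0 z = z := by simp [rotateAbout]

@[fun_prop]
lemma continuous_rotateAbout : Continuous fun t => rotateAbout c t z := by
  unfold rotateAbout; fun_prop

lemma injOn_rotateAbout (h : z ≠ c) : InjOn (fun t => rotateAbout c t z) (Ioo (-π) π) := by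
  have harg {t : ℝ} (ht : t ∈ Ioo (-π) π) : arg (exp (t * I)) = t := by
    rw [arg_exp_mul_I, toIocMod_eq_self]
    exact ⟨ht.1, by linarith [ht.2]⟩
  intro t ht t' ht' htt'
  rw [← harg ht, ← harg ht', mul_left_cancel₀ (sub_ne_zero.2 h) (add_left_cancel htt')]

end rotateAbout

noncomputable def stair (d : ℕ → ℝ) : ℕ → ℂ
  | 0 => 0
  | e + 1 => stair d e + d e * (if e % 3 = 2 then I else 1)

section stair

variable (d : ℕ → ℝ)

lemma stair_three_mul_add_two (j : ℕ) :
    stair d (3 * j + 2) = stair d (3 * j + 1) + d (3 * j + 1) := by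
  simp [stair, Nat.add_mod]

lemma stair_three_mul_add_three (j : ℕ) :
    stair d (3 * j + 3) = stair d (3 * j + 2) + d (3 * j + 2) * I := by
  simp [stair, Nat.add_mod]

lemma stair_three_mul_add_four (j : ℕ) :
    stair d (3 * j + 4) = stair d (3 * j + 3) + d (3 * j + 3) := by
  simp [stair, Nat.add_mod]

variable {d}

lemma injective_stair (hd : ∀ e, 0 < d e) : Injective (stair d) := by
  have hmono : StrictMono fun e => (stair d e).re + (stair d e).im :=
    strictMono_nat_of_lt_succ fun e => by
      simp only [stair]; split_ifs <;> simp [hd e]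
  exact Injective.of_comp (f := fun z : ℂ => z.re + z.im) hmono.injective

end stair

noncomputable def chainPoint (d : ℕ → ℝ) (i : ℕ) (t : ℝ) : ℂ :=
  if i % 3 = 1 then stair d i
  else if i % 3 = 2 then rotateAbout (stair d (i - 1)) t (stair d i)
  else if i = 0 then rotateAbout (stair d 1) t (stair d 0)
  else circleInter (d (i - 1)) (d i) (rotateAbout (stair d (i - 2)) t (stair d (i - 1)))
    (stair d (i + 1))

section chainPoint

variable {d : ℕ → ℝ}

lemma chainPoint_zero (t : ℝ) : chainPoint d 0 t = rotateAbout (stair d 1) t (stair d 0) := by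
  simp [chainPoint]

lemma chainPoint_three_mul_add_one (j : ℕ) (t : ℝ) :
    chainPoint d (3 * j + 1) t = stair d (3 * j + 1) := by
  simp [chainPoint, Nat.add_mod]

lemma chainPoint_three_mul_add_two (j : ℕ) (t : ℝ) :
    chainPoint d (3 * j + 2) t = rotateAbout (stair d (3 * j + 1)) t (stair d (3 * j + 2)) := by
  simp [chainPoint, Nat.add_mod]

lemma chainPoint_three_mul_add_three (j : ℕ) (t : ℝ) :
    chainPoint d (3 * j + 3) t = circleInter (d (3 * j + 2)) (d (3 * j + 3))
      (chainPoint d (3 * j + 2) t) (stair d (3 * j + 4)) := by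
  rw [chainPoint_three_mul_add_two]
  simp [chainPoint]

lemma nat_cases_mod_three (i : ℕ) : i = 0 ∨ ∃ j, i = 3 * j + 1 ∨ i = 3 * j + 2 ∨ i = 3 * j + 3 := by
  rcases i with _ | i
  · exact .inl rfl
  · exact .inr ⟨i / 3, by omega⟩

variable (hd : ∀ e, 0 < d e)
include hd

lemma dist_chainPoint_stair_mem_Ioo (j : ℕ) :
    dist (chainPoint d (3 * j + 2) 0) (stair d (3 * j + 4)) ∈
      Ioo |d (3 * j + 2) - d (3 * j + 3)| (d (3 * j + 2) + d (3 * j + 3)) := by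
  have hb := hd (3 * j + 2)
  have hc := hd (3 * j + 3)
  have hD : dist (chainPoint d (3 * j + 2) 0) (stair d (3 * j + 4)) ^ 2 =
      d (3 * j + 2) ^ 2 + d (3 * j + 3) ^ 2 := by
    rw [chainPoint_three_mul_add_two, rotateAbout_zero, dist_comm, dist_eq, Complex.sq_norm,
      stair_three_mul_add_four, stair_three_mul_add_three, add_assoc, add_sub_cancel_left,
      add_comm, normSq_add_mul_I]
    ring
  constructor
  · refine lt_of_pow_lt_pow_left₀ 2 dist_nonneg ?_
    rw [sq_abs, hD]; nlinarith
  · refine lt_of_pow_lt_pow_left₀ 2 (by positivity) ?_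
    rw [hD]; nlinarith

lemma chainPoint_at_zero (i : ℕ) : chainPoint d i 0 = stair d i := by
  rcases nat_cases_mod_three i with rfl | ⟨j, rfl | rfl | rfl⟩
  · rw [chainPoint_zero, rotateAbout_zero]
  · rw [chainPoint_three_mul_add_one]
  · rw [chainPoint_three_mul_add_two, rotateAbout_zero]
  · rw [chainPoint_three_mul_add_three, chainPoint_three_mul_add_two, rotateAbout_zero,
      stair_three_mul_add_four, stair_three_mul_add_three, add_assoc, add_comm (d _ * I : ℂ),
      circleInter_add_mul_I (hd _) (hd _)]

lemma eventually_dist_chainPoint_stair_mem_Ioo (j : ℕ) : ∀ᶠ t in 𝓝 0,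
    dist (chainPoint d (3 * j + 2) t) (stair d (3 * j + 4)) ∈
      Ioo |d (3 * j + 2) - d (3 * j + 3)| (d (3 * j + 2) + d (3 * j + 3)) := by
  have hcont : Continuous fun t => dist (chainPoint d (3 * j + 2) t) (stair d (3 * j + 4)) := by
    simp only [chainPoint_three_mul_add_two]; fun_prop
  exact hcont.continuousAt.eventually (isOpen_Ioo.mem_nhds (dist_chainPoint_stair_mem_Ioo hd j))

lemma continuousAt_chainPoint (i : ℕ) : ContinuousAt (chainPoint d i) 0 := by
  rcases nat_cases_mod_three i with rfl | ⟨j, rfl | rfl | rfl⟩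
  · rw [funext (chainPoint_zero (d := d))]; fun_prop
  · rw [funext (chainPoint_three_mul_add_one (d := d) j)]; fun_prop
  · rw [funext (chainPoint_three_mul_add_two (d := d) j)]; fun_prop
  · rw [funext (chainPoint_three_mul_add_three (d := d) j)]
    have hne : chainPoint d (3 * j + 2) 0 ≠ stair d (3 * j + 4) := by
      rw [← dist_pos]; exact (abs_nonneg _).trans_lt (dist_chainPoint_stair_mem_Ioo hd j).1
    exact (continuousAt_circleInter hne).comp
      (f := fun t => (chainPoint d (3 * j + 2) t, stair d (3 * j + 4)))
      (by simp only [chainPoint_three_mul_add_two]; fun_prop)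

-- For `j = 0` the truncated index `3 * j - 1` is `0`, which is also a rotating point.
lemma injOn_chainPoint_three_mul_sub_one (j : ℕ) :
    InjOn (chainPoint d (3 * j - 1)) (Ioo (-π) π) := by
  rcases j with _ | j
  · exact funext (chainPoint_zero (d := d)) ▸
      injOn_rotateAbout ((injective_stair hd).ne zero_ne_one)
  · rw [show 3 * (j + 1) - 1 = 3 * j + 2 by omega, funext (chainPoint_three_mul_add_two (d := d) j)]
    exact injOn_rotateAbout ((injective_stair hd).ne (by omega))

end chainPoint

noncomputable def paramChain (d : ℕ → ℝ) (u : ℕ → ℝ) (i : ℕ) : ℂ := chainPoint d i (u ((i + 1) / 3))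

section paramChain

variable {d : ℕ → ℝ} (hd : ∀ e, 0 < d e)
include hd

lemma eventually_dist_paramChain (e : ℕ) :
    ∀ᶠ u in 𝓝 (0 : ℕ → ℝ), dist (paramChain d u e) (paramChain d u (e + 1)) = d e := by
  have hstep (j : ℕ) := ((continuous_apply (j + 1)).tendsto (0 : ℕ → ℝ)).eventually
    (eventually_dist_chainPoint_stair_mem_Ioo hd j)
  rcases nat_cases_mod_three e with rfl | ⟨j, rfl | rfl | rfl⟩
  · refine .of_forall fun u => ?_
    change dist (chainPoint d 0 (u 0)) (chainPoint d (3 * 0 + 1) (u 0)) = d 0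
    rw [chainPoint_zero, chainPoint_three_mul_add_one, dist_rotateAbout_center]
    simp [stair, dist_eq, (hd 0).le]
  · refine .of_forall fun u => ?_
    rw [paramChain, paramChain, chainPoint_three_mul_add_one, chainPoint_three_mul_add_two,
      dist_comm, dist_rotateAbout_center, stair_three_mul_add_two]
    simp [(hd _).le]
  · filter_upwards [hstep j] with u hu
    rw [paramChain, paramChain, show (3 * j + 2 + 1) / 3 = j + 1 by omega,
      show (3 * j + 2 + 1 + 1) / 3 = j + 1 by omega, chainPoint_three_mul_add_three, dist_comm]
    exact dist_circleInter_left hu.1 hu.2.le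
  · filter_upwards [hstep j] with u hu
    rw [paramChain, paramChain, show (3 * j + 3 + 1) / 3 = j + 1 by omega,
      show 3 * j + 3 + 1 = 3 * (j + 1) + 1 by ring, chainPoint_three_mul_add_one,
      chainPoint_three_mul_add_three]
    exact dist_circleInter_right hu.1 hu.2.le

end paramChain

lemma eventually_isDistChain_paramChain {d : ℕ → ℝ} (hd : ∀ e, 0 < d e) (N : ℕ) :
    ∀ᶠ u in 𝓝 (0 : ℕ → ℝ),
      IsDistChain (fun e : Fin N => d e) fun i : Fin (N + 1) => paramChain d u i := by
  have hlim : Tendsto (fun u (i : Fin (N + 1)) => paramChain d u i) (𝓝 0)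
      (𝓝 fun i => stair d i) :=
    tendsto_pi_nhds.2 fun i => by
      simpa [chainPoint_at_zero hd, paramChain, comp_def] using
        (continuousAt_chainPoint hd i).tendsto.comp
          ((continuous_apply ((i + 1) / 3 : ℕ)).tendsto (0 : ℕ → ℝ))
  filter_upwards [hlim.eventually_injective ((injective_stair hd).comp Fin.val_injective),
    eventually_all.2 fun e : Fin N => eventually_dist_paramChain hd e] with u hinj hdist
  exact ⟨hinj, hdist⟩

theorem stmt_3_general (k : ℕ) (δ : Fin k → ℝ) (hδ : ∀ i, 0 < δ i) :
    ∃ c > (0 : ℝ), ∀ n : ℕ, 1 ≤ n →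
      ∃ P : Fin (k + 1) → Finset (EuclideanSpace ℝ (Fin 2)),
        (∀ i, (P i).card ≤ n) ∧
        c * (n : ℝ) ^ ((k + 1) / 3 + 1 : ℕ) ≤
          (chainCount 2 k δ (fun i => (P i : Set (EuclideanSpace ℝ (Fin 2)))) : ℝ) := by
  set d : ℕ → ℝ := extend Fin.val δ 1
  have hd : ∀ e, 0 < d e := extend_val_pos hδ
  have hdδ : (fun i : Fin k => d i) = δ := funext (Fin.val_injective.extend_apply δ 1)
  let ρ (i : Fin (k + 1)) : Fin ((k + 1) / 3 + 1) := Fin.ofNat _ ((i + 1) / 3)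
  let F (i : Fin (k + 1)) (t : ℝ) := orthonormalBasisOneI.repr (chainPoint d i t)
  have hchain :
      ∀ᶠ u in 𝓝 (0 : Fin ((k + 1) / 3 + 1) → ℝ), IsDistChain δ fun i => F i (u (ρ i)) := by
    have hlim : Tendsto (fun (u : Fin ((k + 1) / 3 + 1) → ℝ) (j : ℕ) => u (Fin.ofNat _ j))
        (𝓝 0) (𝓝 0) :=
      (continuous_pi fun j => continuous_apply _).tendsto' 0 0 rfl
    filter_upwards [hlim.eventually (eventually_isDistChain_paramChain hd k)] with u hu
    exact hdδ ▸ hu.comp_isometry orthonormalBasisOneI.repr.isometry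
  have hsection (j : Fin ((k + 1) / 3 + 1)) : ∃ i, ρ i = j ∧ InjOn (F i) (Ioo (-π) π) := by
    refine ⟨⟨3 * j - 1, by omega⟩, Fin.ext ?_, ?_⟩
    · simp only [ρ, Fin.val_ofNat, show (3 * (j : ℕ) - 1 + 1) / 3 = j by omega]
      exact Nat.mod_eq_of_lt j.isLt
    · exact orthonormalBasisOneI.repr.injective.comp_injOn
        (injOn_chainPoint_three_mul_sub_one hd j)
  have hV : Ioo (-π) π ∈ 𝓝 0 := Ioo_mem_nhds (neg_neg_of_pos Real.pi_pos) Real.pi_pos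
  refine ⟨1, one_pos, fun n _ => ?_⟩
  obtain ⟨P, hcard, hcount⟩ := exists_pow_le_chainCount ρ F hchain hV hsection n
  exact ⟨P, hcard, by simpa using (Nat.cast_le (α := ℝ)).2 hcount⟩

theorem stmt_3 (k : ℕ) (hk : 1 ≤ k) (hkmod : k % 3 = 0 ∨ k % 3 = 2)
    (δ : Fin k → ℝ) (hδ : ∀ i, 0 < δ i) :
    ∃ c > (0 : ℝ), ∀ n : ℕ, 1 ≤ n →
      ∃ P : Fin (k + 1) → Finset (EuclideanSpace ℝ (Fin 2)),
        (∀ i, (P i).card ≤ n) ∧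
        c * (n : ℝ) ^ ((k + 1) / 3 + 1 : ℕ) ≤
          (chainCount 2 k δ (fun i => (P i : Set (EuclideanSpace ℝ (Fin 2)))) : ℝ) :=
  stmt_3_general k δ hδ
end

section
/- Fix an even integer k ≥ 2 and a sequence δ = (δ₁, …, δ_k) of positive real numbers. There exists a constant c > 0 such that for every integer n ≥ k+1 there exists a finite set P ⊆ ℝ³ with |P| ≤ n whose number of k-chains with respect to δ is at least c · n^{k/2 + 1}. -/
/-!
Fix a radius `0 < r < min δ` and heights `s₀ < s₁ < ⋯ < s_k` on the `z`-axis with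
`s_{j+1} - s_j = √(δ_j² - r²)`. Put `N` points on the horizontal circle of radius `r` at height
`s_j` for even `j` and the single axis point at height `s_j` for odd `j`. By Pythagoras every
point of a layer is at distance `δ_j` from every point of the next one, and distinct heights make
every choice of one point per layer an injective chain. This gives `N^(k/2+1)` chains on at most
`(k+1)N` points; take `N = ⌊n/(k+1)⌋`.
-/

open Finset

section ChainCount

variable {d k : ℕ} {δ : Fin k → ℝ}

lemma chainCount_mono {P Q : Fin (k + 1) → Set (EuclideanSpace ℝ (Fin d))}
    (hPQ : ∀ i, P i ⊆ Q i) (hQ : ∀ i, (Q i).Finite) :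
    chainCount d k δ P ≤ chainCount d k δ Q :=
  Set.ncard_le_ncard (fun _ ⟨hinj, hP, hdist⟩ => ⟨hinj, fun i => hPQ i (hP i), hdist⟩)
    ((Set.Finite.pi hQ).subset fun _ hp i _ => hp.2.1 i)

lemma chainCount_eq_prod_card {S : Fin (k + 1) → Finset (EuclideanSpace ℝ (Fin d))}
    (hdisj : Pairwise fun i j => Disjoint (S i) (S j))
    (hdist : ∀ i : Fin k, ∀ x ∈ S i.castSucc, ∀ y ∈ S i.succ, dist x y = δ i) :
    chainCount d k δ (fun i => S i) = ∏ i, (S i).card := by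
  classical
  rw [← Fintype.card_piFinset, ← Set.ncard_coe_finset]
  unfold chainCount
  congr 1
  ext p
  simp only [Set.mem_ofPred_eq, Finset.mem_coe, Fintype.mem_piFinset]
  refine ⟨fun h => h.2.1, fun hp =>
    ⟨fun i j hij => ?_, hp, fun i => hdist i _ (hp _) _ (hp _)⟩⟩
  by_contra hne
  exact Finset.disjoint_left.1 (hdisj hne) (hp i) (hij ▸ hp j)

end ChainCount

lemma prod_range_ite_even (a m : ℕ) :
    ∏ j ∈ range (2 * m + 1), (if Even j then a else 1) = a ^ (m + 1) := by
  induction m with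
  | zero => simp
  | succ m ih =>
    rw [show 2 * (m + 1) + 1 = 2 * m + 1 + 1 + 1 by ring, prod_range_succ, prod_range_succ, ih]
    simp [Nat.even_add_one, pow_succ]

lemma Nat.le_two_mul_mul_div {n b : ℕ} (hb : 0 < b) (hbn : b ≤ n) : n ≤ 2 * b * (n / b) := by
  have hdiv := Nat.div_add_mod n b
  have hmod := Nat.mod_lt n hb
  have hq : b ≤ b * (n / b) := Nat.le_mul_of_pos_right _ (Nat.div_pos hbn hb)
  linarith

open Real

namespace ZigzagConfiguration

def axisPoint (z : ℝ) : EuclideanSpace ℝ (Fin 3) := !₂[0, 0, z]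

def horizontalCircle (r z : ℝ) : Set (EuclideanSpace ℝ (Fin 3)) :=
  {p | p 2 = z ∧ p 0 ^ 2 + p 1 ^ 2 = r ^ 2}

lemma horizontalCircle_infinite {r : ℝ} (hr : r ≠ 0) (z : ℝ) :
    (horizontalCircle r z).Infinite := by
  refine Set.infinite_of_injOn_mapsTo (f := fun θ => !₂[r * cos θ, r * sin θ, z])
    (s := Set.Icc 0 π) (fun θ hθ θ' hθ' h => injOn_cos hθ hθ' ?_) (fun θ _ => ?_)
    (Set.Icc_infinite pi_pos)
  · exact mul_left_cancel₀ hr (congrArg (· 0) h)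
  · refine ⟨rfl, ?_⟩
    simp only [Matrix.cons_val_zero, Matrix.cons_val_one]
    linear_combination r ^ 2 * sin_sq_add_cos_sq θ

lemma dist_axisPoint_of_mem_horizontalCircle {r z z' : ℝ} {p : EuclideanSpace ℝ (Fin 3)}
    (hp : p ∈ horizontalCircle r z) : dist p (axisPoint z') = √(r ^ 2 + (z - z') ^ 2) := by
  obtain ⟨hz, hr⟩ := hp
  simp [EuclideanSpace.dist_eq, Fin.sum_univ_three, axisPoint, Real.dist_eq, sq_abs, hz, ← hr]

variable {k : ℕ} {δ : Fin k → ℝ} {r : ℝ}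

lemma strictMono_partialSum_sqrt (hr : 0 < r) (hrδ : ∀ i, r < δ i) :
    StrictMono (Fin.partialSum fun i => √(δ i ^ 2 - r ^ 2)) :=
  Fin.strictMono_iff_lt_succ.2 fun i => by
    rw [Fin.partialSum_succ, lt_add_iff_pos_right, sqrt_pos, sub_pos]
    exact pow_lt_pow_left₀ (hrδ i) hr.le two_ne_zero

lemma sq_add_sq_partialSum_sub (hr : 0 < r) (hrδ : ∀ i, r < δ i) (i : Fin k) :
    r ^ 2 + (Fin.partialSum (fun i => √(δ i ^ 2 - r ^ 2)) i.succ -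
      Fin.partialSum (fun i => √(δ i ^ 2 - r ^ 2)) i.castSucc) ^ 2 = δ i ^ 2 := by
  rw [Fin.partialSum_succ, add_sub_cancel_left, sq_sqrt]
  · ring
  · nlinarith [hrδ i]

theorem exists_layers (hδ : ∀ i, 0 < δ i) (N : ℕ) :
    ∃ S : Fin (k + 1) → Finset (EuclideanSpace ℝ (Fin 3)),
      (∀ j, (S j).card = if Even (j : ℕ) then N else 1) ∧
      (Pairwise fun i j => Disjoint (S i) (S j)) ∧
      ∀ i : Fin k, ∀ x ∈ S i.castSucc, ∀ y ∈ S i.succ, dist x y = δ i := by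
  classical
  obtain ⟨r, hr, hrδ⟩ : ∃ r, 0 < r ∧ ∀ i, r < δ i := by
    simpa using Pi.exists_forall_pos_add_lt (x := 0) hδ
  set s := Fin.partialSum fun i => √(δ i ^ 2 - r ^ 2)
  choose C hC hCcard using fun z => (horizontalCircle_infinite hr.ne' z).exists_subset_card_eq N
  set S : Fin (k + 1) → Finset (EuclideanSpace ℝ (Fin 3)) :=
    fun j => if Even (j : ℕ) then C (s j) else {axisPoint (s j)}
  have height : ∀ j, ∀ p ∈ S j, p 2 = s j := by
    intro j p hp
    by_cases hj : Even (j : ℕ)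
    · simp only [S, if_pos hj] at hp
      exact (hC _ hp).1
    · simp only [S, if_neg hj, Finset.mem_singleton] at hp
      simp [hp, axisPoint]
  refine ⟨S, fun j => ?_, fun i j hij => Finset.disjoint_left.2 fun p hi hj => ?_, fun i => ?_⟩
  · split_ifs with hj <;> simp [S, hj, hCcard]
  · exact hij <| (strictMono_partialSum_sqrt hr hrδ).injective <|
      (height i p hi).symm.trans (height j p hj)
  · have hstep := sq_add_sq_partialSum_sub hr hrδ i
    by_cases hi : Even (i : ℕ)
    · have hi' : ¬Even ((i.succ : Fin (k + 1)) : ℕ) := by simpa [Nat.even_add_one] using hi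
      simp only [S, Fin.val_castSucc, if_pos hi, if_neg hi', Finset.mem_singleton]
      rintro x hx y rfl
      rw [dist_axisPoint_of_mem_horizontalCircle (hC _ hx), ← neg_sub, neg_sq, hstep,
        sqrt_sq (hδ i).le]
    · have hi' : Even ((i.succ : Fin (k + 1)) : ℕ) := by simpa [Nat.even_add_one] using hi
      simp only [S, Fin.val_castSucc, if_neg hi, if_pos hi', Finset.mem_singleton]
      rintro x rfl y hy
      rw [dist_comm, dist_axisPoint_of_mem_horizontalCircle (hC _ hy), hstep, sqrt_sq (hδ i).le]

theorem exists_finset_chainCount_ge (hk : Even k) (hδ : ∀ i, 0 < δ i) {N : ℕ} (hN : 1 ≤ N) :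
    ∃ P : Finset (EuclideanSpace ℝ (Fin 3)), P.card ≤ (k + 1) * N ∧
      N ^ (k / 2 + 1) ≤ chainCount 3 k δ (fun _ => P) := by
  classical
  obtain ⟨S, hcard, hdisj, hdist⟩ := exists_layers hδ N
  refine ⟨univ.biUnion S, ?_, ?_⟩
  · refine (card_biUnion_le_card_mul _ _ N fun j _ => ?_).trans_eq (by simp)
    rw [hcard]
    split_ifs <;> omega
  · obtain ⟨m, rfl⟩ := hk
    calc N ^ ((m + m) / 2 + 1)
        = ∏ j : Fin (m + m + 1), (S j).card := by
          simp only [hcard, Fin.prod_univ_eq_prod_range (fun j => if Even j then N else 1),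
            ← two_mul, prod_range_ite_even, Nat.mul_div_cancel_left _ two_pos]
      _ = chainCount 3 (m + m) δ (fun j => S j) := (chainCount_eq_prod_card hdisj hdist).symm
      _ ≤ chainCount 3 (m + m) δ (fun _ => univ.biUnion S) :=
          chainCount_mono (fun j => mod_cast subset_biUnion_of_mem S (mem_univ j))
            fun _ => Finset.finite_toSet _

end ZigzagConfiguration

open ZigzagConfiguration in
theorem stmt_9_general (k : ℕ) (hkeven : Even k)
    (δ : Fin k → ℝ) (hδ : ∀ i, 0 < δ i) :
    ∃ c > (0 : ℝ), ∀ n : ℕ, k + 1 ≤ n →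
      ∃ P : Finset (EuclideanSpace ℝ (Fin 3)), P.card ≤ n ∧
        c * (n : ℝ) ^ (k / 2 + 1 : ℕ) ≤
          (chainCount 3 k δ (fun _ => (P : Set (EuclideanSpace ℝ (Fin 3)))) : ℝ) := by
  refine ⟨(2 * (k + 1) : ℝ)⁻¹ ^ (k / 2 + 1), by positivity, fun n hn => ?_⟩
  set N := n / (k + 1)
  obtain ⟨P, hPcard, hchains⟩ :=
    exists_finset_chainCount_ge hkeven hδ (Nat.div_pos hn k.succ_pos : 1 ≤ N)
  refine ⟨P, hPcard.trans (Nat.mul_div_le n (k + 1)), ?_⟩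
  have hnN : (n : ℝ) ≤ 2 * (k + 1) * N := by
    exact_mod_cast Nat.le_two_mul_mul_div k.succ_pos hn
  calc (2 * (k + 1) : ℝ)⁻¹ ^ (k / 2 + 1) * (n : ℝ) ^ (k / 2 + 1)
      = ((2 * (k + 1) : ℝ)⁻¹ * n) ^ (k / 2 + 1) := (mul_pow _ _ _).symm
    _ ≤ (N : ℝ) ^ (k / 2 + 1) := by
        gcongr
        rwa [inv_mul_le_iff₀ (by positivity)]
    _ ≤ _ := by exact_mod_cast hchains

theorem stmt_9 (k : ℕ) (hk : 2 ≤ k) (hkeven : Even k)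
    (δ : Fin k → ℝ) (hδ : ∀ i, 0 < δ i) :
    ∃ c > (0 : ℝ), ∀ n : ℕ, k + 1 ≤ n →
      ∃ P : Finset (EuclideanSpace ℝ (Fin 3)), P.card ≤ n ∧
        c * (n : ℝ) ^ (k / 2 + 1 : ℕ) ≤
          (chainCount 3 k δ (fun _ => (P : Set (EuclideanSpace ℝ (Fin 3)))) : ℝ) :=
  stmt_9_general k hkeven δ hδ
end

section
/- Fix an integer k ≥ 1 and let δ = (1, 1, …, 1) be the all-ones sequence of length k. There exists a constant c > 0 such that for every integer n ≥ 2(k+1) there exists a finite set P ⊆ ℝ⁴ with |P| ≤ n whose number of k-chains with respect to δ is at least c · n^{k+1}. -/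
open Function Set

section AlternatingChain

variable {ι E : Type*}

def alternatingChain {k : ℕ} (a b : ι → E) (σ : Fin (k + 1) ↪ ι) : Fin (k + 1) → E :=
  fun i => if Even (i : ℕ) then a (σ i) else b (σ i)

variable {a b : ι → E}

lemma alternatingChain_injective_of_disjoint {k : ℕ} (ha : Injective a) (hb : Injective b)
    (hab : ∀ i j, a i ≠ b j) (σ : Fin (k + 1) ↪ ι) :
    Injective (alternatingChain a b σ) := by
  intro i j hij
  apply σ.injective
  unfold alternatingChain at hij
  split_ifs at hij
  · exact ha hij
  · exact absurd hij (hab _ _)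
  · exact absurd hij.symm (hab _ _)
  · exact hb hij

lemma alternatingChain_mem {k : ℕ} (σ : Fin (k + 1) ↪ ι) (i : Fin (k + 1)) :
    alternatingChain a b σ i ∈ range a ∪ range b := by
  unfold alternatingChain
  split_ifs
  · exact Or.inl (mem_range_self _)
  · exact Or.inr (mem_range_self _)

lemma injective_alternatingChain {k : ℕ} (ha : Injective a) (hb : Injective b) :
    Injective (alternatingChain (k := k) a b) := by
  intro σ τ h
  ext i
  have hi := congrFun h i
  unfold alternatingChain at hi
  split_ifs at hi
  · exact ha hi
  · exact hb hi

lemma dist_alternatingChain [PseudoMetricSpace E] {r : ℝ} (hr : ∀ i j, dist (a i) (b j) = r)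
    {k : ℕ} (σ : Fin (k + 1) ↪ ι) (i : Fin k) :
    dist (alternatingChain a b σ i.castSucc) (alternatingChain a b σ i.succ) = r := by
  simp only [alternatingChain, Fin.val_castSucc, Fin.val_succ, Nat.even_add_one]
  split_ifs
  · exact hr _ _
  · rw [dist_comm]; exact hr _ _

end AlternatingChain

lemma descFactorial_le_chainCount {ι : Type*} [Fintype ι] {d k : ℕ} {r : ℝ}
    {a b : ι → EuclideanSpace ℝ (Fin d)} (ha : Injective a) (hb : Injective b)
    (hab : ∀ i j, a i ≠ b j) (hr : ∀ i j, dist (a i) (b j) = r) :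
    (Fintype.card ι).descFactorial (k + 1) ≤
      chainCount d k (fun _ => r) (fun _ => range a ∪ range b) := by
  classical
  have hfin : {p : Fin (k + 1) → EuclideanSpace ℝ (Fin d) |
      Injective p ∧ (∀ i, p i ∈ range a ∪ range b) ∧
      ∀ i : Fin k, dist (p i.castSucc) (p i.succ) = r}.Finite :=
    (Finite.pi fun _ => (finite_range a).union (finite_range b)).subset
      fun p hp => mem_univ_pi.2 hp.2.1
  have hcard :
      (Fintype.card ι).descFactorial (k + 1) = (univ : Set (Fin (k + 1) ↪ ι)).ncard := by
    rw [ncard_univ, Nat.card_eq_fintype_card, Fintype.card_embedding_eq, Fintype.card_fin]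
  rw [hcard]
  exact ncard_le_ncard_of_injOn _
    (fun σ _ => ⟨alternatingChain_injective_of_disjoint ha hb hab σ, alternatingChain_mem σ,
      dist_alternatingChain hr σ⟩)
    (injective_alternatingChain ha hb).injOn hfin

section Lenz

open Real

noncomputable def lenzFst (x : ℝ) : EuclideanSpace ℝ (Fin 4) :=
  !₂[x, √(1 / 2 - x ^ 2), 0, 0]

noncomputable def lenzSnd (y : ℝ) : EuclideanSpace ℝ (Fin 4) :=
  !₂[0, 0, y, √(1 / 2 - y ^ 2)]

lemma lenzFst_injective : Injective lenzFst := fun x y h => by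
  simpa [lenzFst] using congrFun (congrArg WithLp.ofLp h) 0

lemma lenzSnd_injective : Injective lenzSnd := fun x y h => by
  simpa [lenzSnd] using congrFun (congrArg WithLp.ofLp h) 2

lemma lenzFst_ne_lenzSnd (x y : ℝ) : lenzFst x ≠ lenzSnd y := by
  intro h
  have h0 := congrFun (congrArg WithLp.ofLp h) 0
  have h1 := congrFun (congrArg WithLp.ofLp h) 1
  simp only [lenzFst, lenzSnd] at h0 h1
  simp_all

lemma dist_lenzFst_lenzSnd {x y : ℝ} (hx : x ^ 2 ≤ 1 / 2) (hy : y ^ 2 ≤ 1 / 2) :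
    dist (lenzFst x) (lenzSnd y) = 1 := by
  rw [EuclideanSpace.dist_eq, Fin.sum_univ_four]
  simp only [lenzFst, lenzSnd, PiLp.toLp_apply, Matrix.cons_val, Real.dist_eq, sq_abs]
  simp only [sub_zero, zero_sub, neg_sq, sq_sqrt (by linarith : (0 : ℝ) ≤ 1 / 2 - x ^ 2),
    sq_sqrt (by linarith : (0 : ℝ) ≤ 1 / 2 - y ^ 2)]
  norm_num

end Lenz

lemma one_div_add_two_injective : Injective fun j : ℕ => 1 / ((j : ℝ) + 2) := fun i j h => by
  simpa using h

lemma one_div_add_two_sq_le (j : ℕ) : (1 / ((j : ℝ) + 2)) ^ 2 ≤ 1 / 2 := by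
  rw [div_pow, one_pow, div_le_div_iff_of_pos_left one_pos (by positivity) two_pos]
  nlinarith [(j.cast_nonneg : (0 : ℝ) ≤ j)]

lemma exists_finset_card_le_two_mul_descFactorial_le_chainCount (k m : ℕ) :
    ∃ P : Finset (EuclideanSpace ℝ (Fin 4)), P.card ≤ 2 * m ∧
      m.descFactorial (k + 1) ≤ chainCount 4 k (fun _ => 1) (fun _ => (P : Set _)) := by
  classical
  set x : Fin m → ℝ := fun j => 1 / ((j : ℕ) + 2)
  have hx : Injective x := one_div_add_two_injective.comp Fin.val_injective
  refine ⟨Finset.univ.image (lenzFst ∘ x) ∪ Finset.univ.image (lenzSnd ∘ x), ?_, ?_⟩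
  · have hm (f : Fin m → EuclideanSpace ℝ (Fin 4)) : (Finset.univ.image f).card ≤ m :=
      Finset.card_image_le.trans_eq (Finset.card_fin m)
    exact (Finset.card_union_le _ _).trans ((add_le_add (hm _) (hm _)).trans_eq (two_mul m).symm)
  · simpa [← Set.image_univ] using descFactorial_le_chainCount (k := k)
      (lenzFst_injective.comp hx) (lenzSnd_injective.comp hx) (fun i j => lenzFst_ne_lenzSnd _ _)
      (fun i j => dist_lenzFst_lenzSnd (one_div_add_two_sq_le i) (one_div_add_two_sq_le j))

lemma div_pow_le_descFactorial_half {n k : ℕ} (hn : 2 * (k + 1) ≤ n) :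
    ((n : ℝ) / (4 * (k + 1))) ^ (k + 1) ≤ ((n / 2).descFactorial (k + 1) : ℝ) := by
  set m := n / 2
  have hmk : k + 1 ≤ m := by omega
  have hn' : (n : ℝ) ≤ 2 * m + 1 := by exact_mod_cast (by omega : n ≤ 2 * m + 1)
  have hsub : ((m + 1 - (k + 1) : ℕ) : ℝ) = m - k := by
    rw [Nat.cast_sub (by omega)]; push_cast; ring
  calc ((n : ℝ) / (4 * (k + 1))) ^ (k + 1) ≤ ((m + 1 - (k + 1) : ℕ) : ℝ) ^ (k + 1) := by
        gcongr
        rw [hsub, div_le_iff₀ (by positivity)]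
        have : (1 : ℝ) ≤ m := by exact_mod_cast (by omega : 1 ≤ m)
        have : (k + 1 : ℝ) ≤ m := by exact_mod_cast hmk
        nlinarith
    _ ≤ _ := by exact_mod_cast Nat.pow_sub_le_descFactorial m (k + 1)

theorem stmt_12_general (k : ℕ) :
    ∃ c > (0 : ℝ), ∀ n : ℕ, 2 * (k + 1) ≤ n →
      ∃ P : Finset (EuclideanSpace ℝ (Fin 4)), P.card ≤ n ∧
        c * (n : ℝ) ^ (k + 1 : ℕ) ≤
          (chainCount 4 k (fun _ => 1)
            (fun _ => (P : Set (EuclideanSpace ℝ (Fin 4)))) : ℝ) := by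
  refine ⟨(1 / (4 * ((k : ℝ) + 1))) ^ (k + 1), by positivity, fun n hn => ?_⟩
  obtain ⟨P, hcard, hcount⟩ :=
    exists_finset_card_le_two_mul_descFactorial_le_chainCount k (n / 2)
  refine ⟨P, hcard.trans (Nat.mul_div_le n 2), ?_⟩
  calc (1 / (4 * ((k : ℝ) + 1))) ^ (k + 1) * (n : ℝ) ^ (k + 1)
      = ((n : ℝ) / (4 * (k + 1))) ^ (k + 1) := by rw [← mul_pow, one_div_mul_eq_div]
    _ ≤ _ := div_pow_le_descFactorial_half hn
    _ ≤ _ := by exact_mod_cast hcount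

theorem stmt_12 (k : ℕ) (hk : 1 ≤ k) :
    ∃ c > (0 : ℝ), ∀ n : ℕ, 2 * (k + 1) ≤ n →
      ∃ P : Finset (EuclideanSpace ℝ (Fin 4)), P.card ≤ n ∧
        c * (n : ℝ) ^ (k + 1 : ℕ) ≤
          (chainCount 4 k (fun _ => 1)
            (fun _ => (P : Set (EuclideanSpace ℝ (Fin 4)))) : ℝ) :=
  stmt_12_general k
end

section
/- Let δ₁, δ₂, δ₃, δ₄ be positive real numbers and let R₁, …, R₅ ⊆ ℝ² be finite sets. Then the number of 5-tuples (r₁, r₂, r₃, r₄, r₅) of pairwise distinct points with r_i ∈ R_i for all i and ‖r_i − r_{i+1}‖ = δ_i for i = 1, 2, 3, 4 is at most 2 · A · B, where A is the number of pairs (r₁, r₂) ∈ R₁ × R₂ with ‖r₁ − r₂‖ = δ₁ and B is the number of pairs (r₄, r₅) ∈ R₄ × R₅ with ‖r₄ − r₅‖ = δ₄. -/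
local notation "E" => EuclideanSpace ℝ (Fin 2)


theorem stmt_13 (δ₁ δ₂ δ₃ δ₄ : ℝ) (hδ₁ : 0 < δ₁) (hδ₂ : 0 < δ₂) (hδ₃ : 0 < δ₃)
    (hδ₄ : 0 < δ₄) (R₁ R₂ R₃ R₄ R₅ : Finset (EuclideanSpace ℝ (Fin 2))) :
    chainCount 2 4 ![δ₁, δ₂, δ₃, δ₄]
        ![(R₁ : Set (EuclideanSpace ℝ (Fin 2))), (R₂ : Set (EuclideanSpace ℝ (Fin 2))),
          (R₃ : Set (EuclideanSpace ℝ (Fin 2))), (R₄ : Set (EuclideanSpace ℝ (Fin 2))),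
          (R₅ : Set (EuclideanSpace ℝ (Fin 2)))] ≤
      2 * Set.ncard {p : EuclideanSpace ℝ (Fin 2) × EuclideanSpace ℝ (Fin 2) |
            p.1 ∈ R₁ ∧ p.2 ∈ R₂ ∧ dist p.1 p.2 = δ₁} *
        Set.ncard {p : EuclideanSpace ℝ (Fin 2) × EuclideanSpace ℝ (Fin 2) |
            p.1 ∈ R₄ ∧ p.2 ∈ R₅ ∧ dist p.1 p.2 = δ₄} := by
  classical
  set P : Fin 5 → Set E := ![(R₁ : Set E), (R₂ : Set E), (R₃ : Set E), (R₄ : Set E), (R₅ : Set E)]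
  set S : Set (Fin 5 → E) := {p : Fin 5 → E |
    Function.Injective p ∧ (∀ i, p i ∈ P i) ∧
    ∀ i : Fin 4, dist (p i.castSucc) (p i.succ) = ![δ₁, δ₂, δ₃, δ₄] i}
  set S₁ : Set (E × E) := {p : E × E | p.1 ∈ R₁ ∧ p.2 ∈ R₂ ∧ dist p.1 p.2 = δ₁}
  set S₂ : Set (E × E) := {p : E × E | p.1 ∈ R₄ ∧ p.2 ∈ R₅ ∧ dist p.1 p.2 = δ₄}
  have hPfin : ∀ i, (P i).Finite := by
    intro i
    fin_cases i <;> simp [P] <;> exact Finset.finite_toSet _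
  have hSfin : S.Finite := by
    apply Set.Finite.subset (Set.Finite.pi hPfin)
    intro p hp
    simp only [Set.mem_pi, Set.mem_univ, forall_true_left]
    exact fun i => hp.2.1 i
  have hS₁fin : S₁.Finite := by
    apply Set.Finite.subset ((R₁.finite_toSet.prod R₂.finite_toSet))
    rintro ⟨a, b⟩ ⟨h1, h2, _⟩
    exact ⟨h1, h2⟩
  have hS₂fin : S₂.Finite := by
    apply Set.Finite.subset ((R₄.finite_toSet.prod R₅.finite_toSet))
    rintro ⟨a, b⟩ ⟨h1, h2, _⟩
    exact ⟨h1, h2⟩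
  have hcc : chainCount 2 4 ![δ₁, δ₂, δ₃, δ₄] P = S.ncard := rfl
  rw [hcc, Set.ncard_eq_toFinset_card _ hSfin, Set.ncard_eq_toFinset_card _ hS₁fin,
    Set.ncard_eq_toFinset_card _ hS₂fin]
  set f : (Fin 5 → E) → (E × E) × (E × E) := fun p => ((p 0, p 1), (p 3, p 4))
  have key : hSfin.toFinset.card ≤ 2 * (hS₁fin.toFinset ×ˢ hS₂fin.toFinset).card := by
    apply Finset.card_le_mul_card_image_of_maps_to (f := f)
    · intro p hp
      rw [Set.Finite.mem_toFinset] at hp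
      obtain ⟨hinj, hmem, hdist⟩ := hp
      have h0 : p 0 ∈ R₁ := by have := hmem 0; simpa [P] using this
      have h1 : p 1 ∈ R₂ := by have := hmem 1; simpa [P] using this
      have h3 : p 3 ∈ R₄ := by have := hmem 3; simpa [P] using this
      have h4 : p 4 ∈ R₅ := by have := hmem 4; simpa [P] using this
      have hd1 : dist (p 0) (p 1) = δ₁ := by have := hdist 0; simpa using this
      have hd4 : dist (p 3) (p 4) = δ₄ := by have := hdist 3; simpa using this
      simp only [Finset.mem_product, Set.Finite.mem_toFinset]
      exact ⟨⟨h0, h1, hd1⟩, ⟨h3, h4, hd4⟩⟩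
    · intro b hb
      -- fiber over b has at most 2 elements
      by_contra hlt
      push_neg at hlt
      obtain ⟨p, hp, q, hq, r, hr, hpq, hpr, hqr⟩ := Finset.two_lt_card.mp hlt
      simp only [Finset.mem_filter, Set.Finite.mem_toFinset] at hp hq hr
      obtain ⟨⟨hpinj, hpmem, hpdist⟩, hfp⟩ := hp
      obtain ⟨⟨hqinj, hqmem, hqdist⟩, hfq⟩ := hq
      obtain ⟨⟨hrinj, hrmem, hrdist⟩, hfr⟩ := hr
      have hqp0 : q 0 = p 0 := congrArg (fun x => x.1.1) (hfq.trans hfp.symm)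
      have hqp1 : q 1 = p 1 := congrArg (fun x => x.1.2) (hfq.trans hfp.symm)
      have hqp3 : q 3 = p 3 := congrArg (fun x => x.2.1) (hfq.trans hfp.symm)
      have hqp4 : q 4 = p 4 := congrArg (fun x => x.2.2) (hfq.trans hfp.symm)
      have hrp0 : r 0 = p 0 := congrArg (fun x => x.1.1) (hfr.trans hfp.symm)
      have hrp1 : r 1 = p 1 := congrArg (fun x => x.1.2) (hfr.trans hfp.symm)
      have hrp3 : r 3 = p 3 := congrArg (fun x => x.2.1) (hfr.trans hfp.symm)
      have hrp4 : r 4 = p 4 := congrArg (fun x => x.2.2) (hfr.trans hfp.symm)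
      have hcne : p 1 ≠ p 3 := fun h => by
        have := hpinj h; exact absurd this (by decide)
      -- extensionality over Fin 5 given agreement at 2
      have ext5 : ∀ u v : Fin 5 → E, u 0 = v 0 → u 1 = v 1 → u 2 = v 2 → u 3 = v 3 →
          u 4 = v 4 → u = v := by
        intro u v h0 h1 h2 h3 h4
        funext i
        fin_cases i <;> assumption
      have hpq2 : p 2 ≠ q 2 := fun h =>
        hpq (ext5 p q hqp0.symm hqp1.symm h hqp3.symm hqp4.symm)
      -- circle conditions
      have hpA : dist (p 2) (p 1) = δ₂ := by
        have := hpdist 1; rw [dist_comm]; simpa using this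
      have hpB : dist (p 2) (p 3) = δ₃ := by
        have := hpdist 2; simpa using this
      have hqA : dist (q 2) (p 1) = δ₂ := by
        have := hqdist 1; rw [dist_comm, ← hqp1]; simpa using this
      have hqB : dist (q 2) (p 3) = δ₃ := by
        have := hqdist 2; rw [← hqp3]; simpa using this
      have hrA : dist (r 2) (p 1) = δ₂ := by
        have := hrdist 1; rw [dist_comm, ← hrp1]; simpa using this
      have hrB : dist (r 2) (p 3) = δ₃ := by
        have := hrdist 2; rw [← hrp3]; simpa using this
      have hdim : Module.finrank ℝ E = 2 := finrank_euclideanSpace_fin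
      have := EuclideanGeometry.eq_of_dist_eq_of_dist_eq_of_finrank_eq_two hdim hcne hpq2
        hpA hqA hrA hpB hqB hrB
      rcases this with h | h
      · exact hpr (ext5 p r hrp0.symm hrp1.symm h.symm hrp3.symm hrp4.symm)
      · exact hqr (ext5 q r (hqp0.trans hrp0.symm) (hqp1.trans hrp1.symm) h.symm
          (hqp3.trans hrp3.symm) (hqp4.trans hrp4.symm))
  calc hSfin.toFinset.card ≤ 2 * (hS₁fin.toFinset ×ˢ hS₂fin.toFinset).card := key
    _ = 2 * hS₁fin.toFinset.card * hS₂fin.toFinset.card := by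
        rw [Finset.card_product]; ring
end

section
/- Fix an integer k ≥ 4 and a sequence δ = (δ₁, …, δ_k) of positive real numbers, and let P₁, …, P_{k+1} ⊆ ℝ² be finite sets. Then the number of multipartite k-chains in P₁ × ⋯ × P_{k+1} with respect to (δ₁, …, δ_k) is at most 2 · A · D, where A is the number of pairs (p₁, p₂) ∈ P₁ × P₂ with ‖p₁ − p₂‖ = δ₁ and D is the number of multipartite (k−3)-chains in P₄ × ⋯ × P_{k+1} with respect to (δ₄, …, δ_k). -/
/-- Two circles in the plane with distinct centers intersect in at most two points. -/
lemma circles_subset_pair (c₁ c₂ : EuclideanSpace ℝ (Fin 2)) (hc : c₁ ≠ c₂) (r₁ r₂ : ℝ) :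
    ∃ a b : EuclideanSpace ℝ (Fin 2),
      {x : EuclideanSpace ℝ (Fin 2) | dist x c₁ = r₁ ∧ dist x c₂ = r₂} ⊆ {a, b} := by
  set S : Set (EuclideanSpace ℝ (Fin 2)) := {x | dist x c₁ = r₁ ∧ dist x c₂ = r₂} with hS
  rcases Set.eq_empty_or_nonempty S with h | ⟨p₁, hp₁⟩
  · exact ⟨c₁, c₁, by rw [h]; exact Set.empty_subset _⟩
  by_cases h2 : ∃ p₂ ∈ S, p₂ ≠ p₁
  · obtain ⟨p₂, hp₂, hne⟩ := h2
    refine ⟨p₁, p₂, fun p hp => ?_⟩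
    have := EuclideanGeometry.eq_of_dist_eq_of_dist_eq_of_finrank_eq_two
      (V := EuclideanSpace ℝ (Fin 2)) (by simp [finrank_euclideanSpace]) hc hne
      hp₂.1 hp₁.1 hp.1 hp₂.2 hp₁.2 hp.2
    simp only [Set.mem_insert_iff, Set.mem_singleton_iff]
    exact this.symm
  · push_neg at h2
    exact ⟨p₁, p₁, fun p hp => Or.inl (h2 p hp)⟩

/-- A counting lemma: if `f` maps `S` into `T` with fibers of size at most `n`,
then `|S| ≤ n * |T|`. -/
lemma ncard_le_mul_ncard {α β : Type*} {S : Set α} {T : Set β} (hS : S.Finite) (hT : T.Finite)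
    (f : α → β) (hmap : ∀ a ∈ S, f a ∈ T) (n : ℕ)
    (hfib : ∀ b ∈ T, {a ∈ S | f a = b}.ncard ≤ n) : S.ncard ≤ n * T.ncard := by
  classical
  rw [Set.ncard_eq_toFinset_card S hS, Set.ncard_eq_toFinset_card T hT]
  refine Finset.card_le_mul_card_image_of_maps_to (f := f) (fun a ha => ?_) n (fun b hb => ?_)
  · rw [Set.Finite.mem_toFinset] at ha ⊢; exact hmap a ha
  · rw [Set.Finite.mem_toFinset] at hb
    have := hfib b hb
    rwa [show {a ∈ S | f a = b} = ↑({a ∈ hS.toFinset | f a = b} : Finset α) by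
        ext a; simp [Set.Finite.mem_toFinset], Set.ncard_coe_finset] at this

local notation "E" => EuclideanSpace ℝ (Fin 2)

theorem stmt_17 (k : ℕ) (hk : 4 ≤ k) (δ : Fin k → ℝ) (hδ : ∀ i, 0 < δ i)
    (P : Fin (k + 1) → Finset (EuclideanSpace ℝ (Fin 2))) :
    chainCount 2 k δ (fun i => (P i : Set (EuclideanSpace ℝ (Fin 2)))) ≤
      2 * Set.ncard {p : EuclideanSpace ℝ (Fin 2) × EuclideanSpace ℝ (Fin 2) |
            p.1 ∈ P ⟨0, by omega⟩ ∧ p.2 ∈ P ⟨1, by omega⟩ ∧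
            dist p.1 p.2 = δ ⟨0, by omega⟩} *
        chainCount 2 (k - 3)
          (fun i : Fin (k - 3) => δ ⟨(i : ℕ) + 3, by have := i.isLt; omega⟩)
          (fun i : Fin (k - 3 + 1) =>
            ((P ⟨(i : ℕ) + 3, by have := i.isLt; omega⟩ : Finset (EuclideanSpace ℝ (Fin 2))) :
              Set (EuclideanSpace ℝ (Fin 2)))) := by
  classical
  set S : Set (Fin (k + 1) → E) := {p | Function.Injective p ∧ (∀ i, p i ∈ (P i : Set E)) ∧
    ∀ i : Fin k, dist (p i.castSucc) (p i.succ) = δ i} with hSdef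
  set A : Set (E × E) := {p : E × E | p.1 ∈ P ⟨0, by omega⟩ ∧ p.2 ∈ P ⟨1, by omega⟩ ∧
    dist p.1 p.2 = δ ⟨0, by omega⟩} with hAdef
  set D : Set (Fin (k - 3 + 1) → E) := {q | Function.Injective q ∧
    (∀ i : Fin (k - 3 + 1), q i ∈ (P ⟨(i : ℕ) + 3, by have := i.isLt; omega⟩ : Set E)) ∧
    ∀ i : Fin (k - 3), dist (q i.castSucc) (q i.succ) =
      δ ⟨(i : ℕ) + 3, by have := i.isLt; omega⟩} with hDdef
  -- finiteness
  have hSfin : S.Finite := by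
    apply Set.Finite.subset (Set.Finite.pi (fun i : Fin (k+1) => (P i).finite_toSet))
    intro p hp
    simp only [Set.mem_pi, Set.mem_univ, forall_true_left]
    exact fun i => hp.2.1 i
  have hDfin : D.Finite := by
    apply Set.Finite.subset (Set.Finite.pi
      (fun i : Fin (k-3+1) => (P ⟨(i : ℕ) + 3, by have := i.isLt; omega⟩).finite_toSet))
    intro q hq
    simp only [Set.mem_pi, Set.mem_univ, forall_true_left]
    exact fun i => hq.2.1 i
  have hAfin : A.Finite := by
    apply Set.Finite.subset (Set.Finite.prod (P ⟨0, by omega⟩).finite_toSet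
      (P ⟨1, by omega⟩).finite_toSet)
    intro p hp
    exact ⟨hp.1, hp.2.1⟩
  -- the projection map
  set f : (Fin (k + 1) → E) → (E × E) × (Fin (k - 3 + 1) → E) :=
    fun p => ((p ⟨0, by omega⟩, p ⟨1, by omega⟩),
      fun j : Fin (k - 3 + 1) => p ⟨(j : ℕ) + 3, by have := j.isLt; omega⟩) with hfdef
  have hmap : ∀ p ∈ S, f p ∈ A ×ˢ D := by
    rintro p ⟨hinj, hmem, hdist⟩
    refine ⟨⟨hmem _, hmem _, ?_⟩, ?_, fun j => hmem _, ?_⟩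
    · exact hdist ⟨0, by omega⟩
    · intro j j' hjj'
      have : (⟨(j : ℕ) + 3, by have := j.isLt; omega⟩ : Fin (k+1)) =
          ⟨(j' : ℕ) + 3, by have := j'.isLt; omega⟩ := hinj hjj'
      have := Fin.mk.injEq .. ▸ this
      exact Fin.ext (by omega)
    · intro i
      exact hdist ⟨(i : ℕ) + 3, by have := i.isLt; omega⟩
  have hfib : ∀ b ∈ A ×ˢ D, {p ∈ S | f p = b}.ncard ≤ 2 := by
    rintro ⟨⟨a₁, a₂⟩, q⟩ hb
    set F : Set (Fin (k+1) → E) := {p ∈ S | f p = ((a₁, a₂), q)} with hFdef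
    rcases Set.eq_empty_or_nonempty F with h | ⟨p₀, hp₀⟩
    · simp [h]
    -- the two centers
    have hp₀1 : p₀ ⟨1, by omega⟩ = a₂ := congrArg Prod.snd (congrArg Prod.fst hp₀.2)
    have hp₀3 : p₀ ⟨3, by omega⟩ = q ⟨0, by omega⟩ :=
      congrFun (congrArg Prod.snd hp₀.2) ⟨0, by omega⟩
    have hcne : a₂ ≠ q ⟨0, by omega⟩ := by
      rw [← hp₀1, ← hp₀3]
      intro h
      have := hp₀.1.1 h
      simp [Fin.ext_iff] at this
    obtain ⟨a, b, hab⟩ := circles_subset_pair a₂ (q ⟨0, by omega⟩) hcne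
      (δ ⟨1, by omega⟩) (δ ⟨2, by omega⟩)
    have h1 : F.ncard ≤ ({a, b} : Set E).ncard := by
      apply Set.ncard_le_ncard_of_injOn (fun p => p ⟨2, by omega⟩)
      · rintro p ⟨⟨hinj, hmem, hdist⟩, hfp⟩
        apply hab
        have hp1 : p ⟨1, by omega⟩ = a₂ := congrArg Prod.snd (congrArg Prod.fst hfp)
        have hp3 : p ⟨3, by omega⟩ = q ⟨0, by omega⟩ :=
          congrFun (congrArg Prod.snd hfp) ⟨0, by omega⟩
        constructor
        · rw [← hp1, dist_comm]
          exact hdist ⟨1, by omega⟩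
        · rw [← hp3]
          exact hdist ⟨2, by omega⟩
      · rintro p ⟨⟨hinj, hmem, hdist⟩, hfp⟩ p' ⟨⟨hinj', hmem', hdist'⟩, hfp'⟩ h2
        funext i
        have hpair : (p ⟨0, by omega⟩, p ⟨1, by omega⟩) = (p' ⟨0, by omega⟩, p' ⟨1, by omega⟩) :=
          (congrArg Prod.fst hfp).trans (congrArg Prod.fst hfp').symm
        have htail : ∀ j : Fin (k - 3 + 1),
            p ⟨(j : ℕ) + 3, by have := j.isLt; omega⟩ =
            p' ⟨(j : ℕ) + 3, by have := j.isLt; omega⟩ := fun j =>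
          (congrFun (congrArg Prod.snd hfp) j).trans
            (congrFun (congrArg Prod.snd hfp') j).symm
        rcases Nat.lt_or_ge (i : ℕ) 3 with hi | hi
        · interval_cases h : (i : ℕ)
          · have : i = ⟨0, by omega⟩ := Fin.ext h
            rw [this]; exact congrArg Prod.fst hpair
          · have : i = ⟨1, by omega⟩ := Fin.ext h
            rw [this]; exact congrArg Prod.snd hpair
          · have : i = ⟨2, by omega⟩ := Fin.ext h
            rw [this]; exact h2
        · have hj : (i : ℕ) - 3 < k - 3 + 1 := by have := i.isLt; omega
          have : i = ⟨((⟨(i : ℕ) - 3, hj⟩ : Fin (k - 3 + 1)) : ℕ) + 3,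
              by have := i.isLt; show (i : ℕ) - 3 + 3 < k + 1; omega⟩ :=
            Fin.ext (show (i : ℕ) = (i : ℕ) - 3 + 3 by omega)
          rw [this]
          exact htail ⟨(i : ℕ) - 3, hj⟩
    calc F.ncard ≤ ({a, b} : Set E).ncard := h1
      _ ≤ 2 := by
        apply le_trans (Set.ncard_insert_le a {b})
        simp
  have hmain : S.ncard ≤ 2 * (A ×ˢ D).ncard :=
    ncard_le_mul_ncard hSfin (hAfin.prod hDfin) f hmap 2 hfib
  have hprod : (A ×ˢ D).ncard = A.ncard * D.ncard := by
    rw [← Nat.card_coe_set_eq, ← Nat.card_coe_set_eq, ← Nat.card_coe_set_eq,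
      Nat.card_congr (Equiv.Set.prod A D), Nat.card_prod]
  calc chainCount 2 k δ (fun i => (P i : Set E)) = S.ncard := rfl
    _ ≤ 2 * (A ×ˢ D).ncard := hmain
    _ = 2 * A.ncard * D.ncard := by rw [hprod, mul_assoc]
    _ = _ := rfl
end
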